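/- If a vertex k belongs to neither C(i) nor C(j*), does not share an edge with vertex i, and vertex i migrates from C(i) to C(j*), then the modularity gain of moving k to C(j*) does not increase; specifically, the new gain equals the old gain minus d(k)·d(i)/(2m)², so if d(k) > 0 and d(i) > 0 the gain strictly decreases. -/

import Mathlib

open Finset

namespace DynCD

variable {V : Type*} [Fintype V] [DecidableEq V]

/-- Weighted degree of a vertex. -/
noncomputable def deg (w : V → V → ℝ) (v : V) : ℝ := ∑ u, w v u

/-- Total weight of edges from `v` into the community `C`. -/
noncomputable def eTo (w : V → V → ℝ) (v : V) (C : Finset V) : ℝ := ∑ u ∈ C, w v u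

/-- Sum of the weighted degrees of the vertices of `C`. -/
noncomputable def aOf (w : V → V → ℝ) (C : Finset V) : ℝ := ∑ v ∈ C, deg w v

/-- Modularity gain of moving `v` from its community `Cv` to the community `C`:
`ΔQ_{v→C} = (e_{v→C} − e_{v→Cv∖{v}})/(2m) + (d(v)·a_{Cv∖{v}} − d(v)·a_C)/(2m)²`. -/
noncomputable def gain (w : V → V → ℝ) (m : ℝ) (v : V) (Cv C : Finset V) : ℝ :=
  (eTo w v C - eTo w v (Cv.erase v)) / (2 * m)
    + (deg w v * aOf w (Cv.erase v) - deg w v * aOf w C) / (2 * m) ^ 2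

/-- Modularity of the set of communities `P` with community assignment `Cfun`:
`Q = (1/2m)·(Σ_v e_{v→C(v)} − (1/2m)·Σ_{C∈P} a_C²)`. -/
noncomputable def modularity (w : V → V → ℝ) (m : ℝ)
    (P : Finset (Finset V)) (Cfun : V → Finset V) : ℝ :=
  (1 / (2 * m)) * ((∑ v, eTo w v (Cfun v)) - (1 / (2 * m)) * ∑ C ∈ P, (aOf w C) ^ 2)

/-- Total weight of the edges inside `C` (each unordered edge counted once). -/
noncomputable def inW (w : V → V → ℝ) (C : Finset V) : ℝ :=
  (1 / 2) * ∑ v ∈ C, ∑ u ∈ C, w v u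

/-- The new set of communities after moving `v` from community `Cv` to community `C`. -/
def moveP (P : Finset (Finset V)) (Cv C : Finset V) (v : V) : Finset (Finset V) :=
  insert (insert v C) (insert (Cv.erase v) ((P.erase Cv).erase C))

/-- The new community assignment after moving `v` from community `Cv` to community `C`. -/
def moveC (Cfun : V → Finset V) (Cv C : Finset V) (v : V) : V → Finset V :=
  fun u => if u = v then insert v C
    else if Cfun u = Cv then Cv.erase v
    else if Cfun u = C then insert v C else Cfun u

/-- `(P, Cfun)` forms a partition of the vertex set into communities. -/
def IsPartition (P : Finset (Finset V)) (Cfun : V → Finset V) : Prop :=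
  (∀ v : V, Cfun v ∈ P ∧ v ∈ Cfun v) ∧ (∀ C ∈ P, ∀ u ∈ C, Cfun u = C)

theorem aOf_insert (w : V → V → ℝ) {i : V} {C : Finset V} (hi : i ∉ C) :
    aOf w (insert i C) = deg w i + aOf w C :=
  sum_insert hi

theorem gain_insert (w : V → V → ℝ) (m : ℝ) {v i : V} {Cv C : Finset V} (hi : i ∉ C) :
    gain w m v Cv (insert i C)
      = gain w m v Cv C + w v i / (2 * m) - deg w v * deg w i / (2 * m) ^ 2 := by
  simp only [gain, eTo, sum_insert hi, aOf_insert w hi]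
  ring

theorem gain_insert_of_not_adj (w : V → V → ℝ) (m : ℝ) {v i : V} {Cv C : Finset V}
    (hi : i ∉ C) (hvi : w v i = 0) :
    gain w m v Cv (insert i C) = gain w m v Cv C - deg w v * deg w i / (2 * m) ^ 2 := by
  rw [gain_insert w m hi, hvi, zero_div, add_zero]

theorem stmt1_general (w : V → V → ℝ) (m : ℝ) (hm : 0 < m)
    (i k : V) (Cj Ck : Finset V)
    (hiCj : i ∉ Cj)
    (hnoedge1 : w k i = 0) :
    gain w m k Ck (insert i Cj)
        = gain w m k Ck Cj - deg w k * deg w i / (2 * m) ^ 2 ∧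
      (0 < deg w k → 0 < deg w i →
        gain w m k Ck (insert i Cj) < gain w m k Ck Cj) := by
  have hdrop := gain_insert_of_not_adj w m (Cv := Ck) hiCj hnoedge1
  refine ⟨hdrop, fun hk hi => ?_⟩
  rw [hdrop]
  exact sub_lt_self _ (by positivity)

/-- If `k` belongs to neither `C(i)` nor `C(j*)`, is not adjacent to `i`, and `i`
migrates from `C(i)` to `C(j*)`, then the modularity gain of moving `k` to `C(j*)`
drops by exactly `d(k)·d(i)/(2m)²`; with positive degrees it strictly decreases. -/
theorem stmt1 (w : V → V → ℝ) (m : ℝ) (hm : 0 < m)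
    (i k : V) (Ci Cj Ck : Finset V)
    (hiCi : i ∈ Ci) (hiCj : i ∉ Cj)
    (hkCi : k ∉ Ci) (hkCj : k ∉ Cj) (hkCk : k ∈ Ck)
    (hCkCi : Ck ≠ Ci) (hCkCj : Ck ≠ Cj)
    (hnoedge1 : w k i = 0) (hnoedge2 : w i k = 0) :
    gain w m k Ck (insert i Cj)
        = gain w m k Ck Cj - deg w k * deg w i / (2 * m) ^ 2 ∧
      (0 < deg w k → 0 < deg w i →
        gain w m k Ck (insert i Cj) < gain w m k Ck Cj) :=
  stmt1_general w m hm i k Cj Ck hiCj hnoedge1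

end DynCD
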